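/- Let X be a 2×2 real matrix with nonnegative integer entries satisfying X⁴ - 20·X² - 16·X = 0 and X ≠ 0. Then the eigenvalues of X are 2(1+√2) and 2(1−√2), each with multiplicity one; in particular tr(X) = 4 and det(X) = −4. -/
import Mathlib

open Polynomial

lemma eig_aux (M : Matrix (Fin 2) (Fin 2) ℝ) (μ : ℝ)
    (h : (M - μ • 1).det = 0) : Module.End.HasEigenvalue (Matrix.toLin' M) μ := by
  rw [Module.End.hasEigenvalue_iff_mem_spectrum]
  have h1 : Matrix.toLin' M = Matrix.toLinAlgEquiv' M := rfl
  rw [h1, AlgEquiv.spectrum_eq, spectrum.mem_iff]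
  intro hu
  rw [Matrix.isUnit_iff_isUnit_det] at hu
  have h2 : algebraMap ℝ (Matrix (Fin 2) (Fin 2) ℝ) μ - M = -(M - μ • 1) := by
    rw [Algebra.algebraMap_eq_smul_one, neg_sub]
  rw [h2, Matrix.det_neg, h] at hu
  simp at hu

lemma no_cube (k : ℕ) (h : k*k*k = 20*k + 16) : False := by
  rcases Nat.lt_or_ge k 6 with h6 | h6
  · interval_cases k <;> omega
  · have h1 : 6*6*k ≤ k*k*k := Nat.mul_le_mul (Nat.mul_le_mul h6 h6) le_rfl
    linarith

lemma cube_four (k : ℕ) (h : k*k*k + 16 = 20*k) : k = 4 := by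
  rcases Nat.lt_or_ge k 5 with h5 | h5
  · interval_cases k <;> omega
  · exfalso
    have h1 : 5*5*k ≤ k*k*k := Nat.mul_le_mul (Nat.mul_le_mul h5 h5) le_rfl
    linarith

lemma charpoly_fin2 (M : Matrix (Fin 2) (Fin 2) ℝ) :
    M.charpoly = Polynomial.X^2 - Polynomial.C M.trace * Polynomial.X
      + Polynomial.C M.det := by
  rw [Matrix.charpoly, Matrix.det_fin_two, Matrix.charmatrix_apply_eq,
    Matrix.charmatrix_apply_eq, Matrix.charmatrix_apply_ne _ _ _ (by decide),
    Matrix.charmatrix_apply_ne _ _ _ (by decide), Matrix.trace_fin_two,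
    Matrix.det_fin_two]
  simp only [map_sub, map_add, map_mul]
  ring

lemma det_sub_smul_one (X : Matrix (Fin 2) (Fin 2) ℝ) (μ : ℝ) :
    (X - μ • 1).det = X.det - μ * X.trace + μ^2 := by
  rw [Matrix.det_fin_two, Matrix.det_fin_two, Matrix.trace_fin_two]
  simp [Matrix.sub_apply, Matrix.smul_apply, Matrix.one_apply]
  ring

lemma trace_det_aux (X : Matrix (Fin 2) (Fin 2) ℝ)
    (hent : ∀ i j, ∃ a : ℕ, X i j = (a : ℝ))
    (heq : X ^ 4 - 20 • X ^ 2 - 16 • X = 0) (hX0 : X ≠ 0) :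
    X.trace = 4 ∧ X.det = -4 := by
  obtain ⟨a, ha⟩ := hent 0 0
  obtain ⟨b, hb⟩ := hent 0 1
  obtain ⟨c, hc⟩ := hent 1 0
  obtain ⟨e, he⟩ := hent 1 1
  have h2 : ∀ i j, (X^2) i j = X i 0 * X 0 j + X i 1 * X 1 j := by
    intro i j; rw [pow_two, Matrix.mul_apply, Fin.sum_univ_two]
  have h4 : ∀ i j, (X^4) i j = (X^2) i 0 * (X^2) 0 j + (X^2) i 1 * (X^2) 1 j := by
    intro i j
    rw [show (4:ℕ) = 2+2 from rfl, pow_add, Matrix.mul_apply, Fin.sum_univ_two]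
  have heqR : X ^ 4 - (20:ℝ) • X ^ 2 - (16:ℝ) • X = 0 := by
    rw [show ((20:ℝ) • X ^ 2) = (20:ℕ) • X ^ 2 by
          rw [← Nat.cast_smul_eq_nsmul ℝ 20 (X^2)]; norm_num,
        show ((16:ℝ) • X) = (16:ℕ) • X by
          rw [← Nat.cast_smul_eq_nsmul ℝ 16 X]; norm_num]
    exact heq
  have key : ∀ i j, (X^4) i j - 20 * (X^2) i j - 16 * X i j = 0 := by
    intro i j
    have := congrFun (congrFun heqR i) j
    simpa [Matrix.sub_apply, Matrix.smul_apply, smul_eq_mul] using this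
  have E : ∀ i j, ((X i 0 * X 0 0 + X i 1 * X 1 0) * (X 0 0 * X 0 j + X 0 1 * X 1 j)
      + (X i 0 * X 0 1 + X i 1 * X 1 1) * (X 1 0 * X 0 j + X 1 1 * X 1 j))
      - 20 * (X i 0 * X 0 j + X i 1 * X 1 j) - 16 * X i j = 0 := by
    intro i j
    have := key i j
    rw [h4] at this; simp only [h2] at this
    exact this
  have E00 := E 0 0; have E01 := E 0 1; have E10 := E 1 0; have E11 := E 1 1
  rw [ha, hb, hc, he] at E00 E01 E10 E11
  set sa := (a:ℝ); set sb := (b:ℝ); set sc := (c:ℝ); set se := (e:ℝ)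
  set t : ℝ := sa + se with hT
  set d : ℝ := sa * se - sb * sc with hD
  have hAb : (t^3 - 2*t*d - 20*t - 16) * sb = 0 := by
    rw [hT, hD]; linear_combination E01
  have hAc : (t^3 - 2*t*d - 20*t - 16) * sc = 0 := by
    rw [hT, hD]; linear_combination E10
  have hAa : (t^3 - 2*t*d - 20*t - 16) * sa - (t^2*d - d^2 - 20*d) = 0 := by
    rw [hT, hD]; linear_combination E00
  have hAe : (t^3 - 2*t*d - 20*t - 16) * se - (t^2*d - d^2 - 20*d) = 0 := by
    rw [hT, hD]; linear_combination E11
  by_cases hA : t^3 - 2*t*d - 20*t - 16 = 0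
  · have hB : t^2*d - d^2 - 20*d = 0 := by linear_combination sa * hA - hAa
    have htn : t = ((a+e : ℕ):ℝ) := by rw [hT]; push_cast; ring
    have hdm : d = (((a:ℤ)*e - (b:ℤ)*c : ℤ):ℝ) := by rw [hD]; push_cast; ring
    set n := a + e with hn
    set m := (a:ℤ)*e - (b:ℤ)*c with hmdef
    rw [htn, hdm] at hA hB
    have hZ1 : (n:ℤ)^3 - 2*n*m - 20*n - 16 = 0 := by exact_mod_cast hA
    have hZ2 : (n:ℤ)^2*m - m^2 - 20*m = 0 := by exact_mod_cast hB
    rcases mul_eq_zero.mp (show m * ((n:ℤ)^2 - m - 20) = 0 by linear_combination hZ2)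
        with h | h
    · exfalso
      apply no_cube n
      have : (n:ℤ)*n*n = 20*n + 16 := by linear_combination hZ1 + 2*(n:ℤ)*h
      exact_mod_cast this
    · have hn4 : n = 4 := by
        apply cube_four n
        have : (n:ℤ)*n*n + 16 = 20*n := by linear_combination -hZ1 + 2*(n:ℤ)*h
        exact_mod_cast this
      have hm4 : m = -4 := by rw [hn4] at h; push_cast at h; linarith
      constructor
      · rw [Matrix.trace_fin_two, ha, he, ← hT, htn, hn4]; norm_num
      · rw [Matrix.det_fin_two, ha, hb, hc, he]
        rw [show sa*se - sb*sc = d from hD.symm, hdm, hm4]; norm_num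
  · exfalso
    have hb0 : sb = 0 := by
      rcases mul_eq_zero.mp hAb with h | h
      · exact absurd h hA
      · exact h
    have hc0 : sc = 0 := by
      rcases mul_eq_zero.mp hAc with h | h
      · exact absurd h hA
      · exact h
    have hae : se = sa := by
      have h' : (t^3 - 2*t*d - 20*t - 16) * (sa - se) = 0 := by linear_combination hAa - hAe
      rcases mul_eq_zero.mp h' with h | h
      · exact absurd h hA
      · linarith
    have ha0 : sa ≠ 0 := by
      intro h0
      apply hX0
      ext i j
      fin_cases i <;> fin_cases j <;>
        simp [ha, hb, hc, he, hb0, hc0, hae, h0]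
    rw [hb0, hc0, hae] at E00
    have h1 : sa * (sa^3 - 20*sa - 16) = 0 := by linear_combination E00
    rcases mul_eq_zero.mp h1 with h | h
    · exact ha0 h
    · apply no_cube a
      have h2' : sa*sa*sa = 20*sa + 16 := by linear_combination h
      have h3' : (a:ℝ)*(a:ℝ)*(a:ℝ) = 20*(a:ℝ) + 16 := h2'
      exact_mod_cast h3'

/-- Let `X` be a `2 × 2` real matrix with nonnegative integer entries satisfying
`X⁴ - 20·X² - 16·X = 0` and `X ≠ 0`. Then the eigenvalues of `X` are `2(1 + √2)` and
`2(1 - √2)`, each with multiplicity one (i.e. the characteristic polynomial is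
`(x - 2(1+√2))(x - 2(1-√2))`); in particular `tr X = 4` and `det X = -4`. -/
theorem stmt4 (X : Matrix (Fin 2) (Fin 2) ℝ)
    (hent : ∀ i j, ∃ a : ℕ, X i j = (a : ℝ))
    (heq : X ^ 4 - 20 • X ^ 2 - 16 • X = 0) (hX0 : X ≠ 0) :
    Module.End.HasEigenvalue (Matrix.toLin' X) (2 * (1 + Real.sqrt 2)) ∧
    Module.End.HasEigenvalue (Matrix.toLin' X) (2 * (1 - Real.sqrt 2)) ∧
    X.charpoly =
      (Polynomial.X - Polynomial.C (2 * (1 + Real.sqrt 2))) *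
        (Polynomial.X - Polynomial.C (2 * (1 - Real.sqrt 2))) ∧
    X.trace = 4 ∧ X.det = -4 := by
  obtain ⟨htr, hdet⟩ := trace_det_aux X hent heq hX0
  have hs : Real.sqrt 2 * Real.sqrt 2 = 2 := Real.mul_self_sqrt (by norm_num)
  have hcp : X.charpoly =
      (Polynomial.X - Polynomial.C (2 * (1 + Real.sqrt 2))) *
        (Polynomial.X - Polynomial.C (2 * (1 - Real.sqrt 2))) := by
    rw [charpoly_fin2, htr, hdet]
    apply Polynomial.funext
    intro x
    simp only [Polynomial.eval_add, Polynomial.eval_sub, Polynomial.eval_mul,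
      Polynomial.eval_pow, Polynomial.eval_X, Polynomial.eval_C]
    linear_combination 4*hs
  refine ⟨?_, ?_, hcp, htr, hdet⟩
  · apply eig_aux
    rw [det_sub_smul_one, htr, hdet]
    linear_combination 4*hs
  · apply eig_aux
    rw [det_sub_smul_one, htr, hdet]
    linear_combination 4*hs
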